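/- arXiv:2601.19992 — 4 statements merged into one kernel-verified Lean document; each statement's English description precedes it below -/
import Mathlib

section
/- Let d ≥ 1 be an integer, ν > 0, μ ∈ ℝ^d, and let Σ be a symmetric positive definite d×d real matrix. Then the function z ↦ (1 + (1/ν)(z − μ)ᵀ Σ⁻¹ (z − μ))^{−(ν+d)/2} is integrable over ℝ^d with respect to Lebesgue measure. Consequently, the multivariate Student-t density with location μ, scale Σ, and ν degrees of freedom is a proper probability density on ℝ^d. -/
open Matrix MeasureTheory

/-!
Since `Σ⁻¹` is positive definite, compactness of the unit sphere gives `δ(z) ≥ c ‖z - μ‖²`, so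
the base `1 + δ(z)/ν` dominates a multiple of `(1 + ‖z - μ‖)²` and the kernel is bounded by a
multiple of `(1 + ‖z - μ‖)^(-(ν + d))`, which is integrable on `ℝ^d` because `ν + d > d`.
The kernel is everywhere positive, so its integral is positive and its reciprocal normalizes it.
-/

theorem exists_pos_mul_sq_norm_le_of_homogeneous {E : Type*} [NormedAddCommGroup E]
    [NormedSpace ℝ E] [FiniteDimensional ℝ E] {q : E → ℝ} (hq : Continuous q)
    (hpos : ∀ x ≠ 0, 0 < q x) (hsmul : ∀ (t : ℝ) x, q (t • x) = t ^ 2 * q x) :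
    ∃ c > 0, ∀ x, c * ‖x‖ ^ 2 ≤ q x := by
  have hzero : q 0 = 0 := by simpa using hsmul 0 0
  rcases subsingleton_or_nontrivial E with hE | hE
  · exact ⟨1, one_pos, fun x => by simp [Subsingleton.elim x 0, hzero]⟩
  obtain ⟨u, hu, hmin⟩ := (isCompact_sphere (0 : E) 1).exists_isMinOn
    (NormedSpace.sphere_nonempty.mpr zero_le_one) hq.continuousOn
  have hu0 : u ≠ 0 := ne_zero_of_mem_unit_sphere ⟨u, hu⟩
  refine ⟨q u, hpos u hu0, fun x => ?_⟩
  rcases eq_or_ne x 0 with rfl | hx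
  · simp [hzero]
  have hnx : ‖x‖ ≠ 0 := norm_ne_zero_iff.mpr hx
  have hunit : ‖x‖⁻¹ • x ∈ Metric.sphere (0 : E) 1 := by
    simp [norm_smul, hnx]
  calc q u * ‖x‖ ^ 2 ≤ q (‖x‖⁻¹ • x) * ‖x‖ ^ 2 := by gcongr; exact hmin hunit
    _ = q x := by rw [hsmul]; field_simp

theorem Matrix.PosDef.exists_pos_mul_sq_norm_le_dotProduct_mulVec {ι : Type*} [Fintype ι]
    {M : Matrix ι ι ℝ} (hM : M.PosDef) : ∃ c > 0, ∀ x, c * ‖x‖ ^ 2 ≤ x ⬝ᵥ (M *ᵥ x) :=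
  exists_pos_mul_sq_norm_le_of_homogeneous (by fun_prop)
    (fun _ hx => by simpa using hM.dotProduct_mulVec_pos hx)
    (fun t x => by rw [mulVec_smul, smul_dotProduct, dotProduct_smul, smul_eq_mul,
      smul_eq_mul]; ring)

theorem min_one_div_two_mul_one_add_sq_le {b : ℝ} (hb : 0 < b) (t : ℝ) :
    min b 1 / 2 * (1 + t) ^ 2 ≤ 1 + b * t ^ 2 := by
  have h1 : min b 1 ≤ b := min_le_left _ _
  have h2 : min b 1 ≤ 1 := min_le_right _ _
  have h3 : 0 < min b 1 := lt_min hb one_pos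
  nlinarith [sq_nonneg (1 - t), sq_nonneg t]

theorem Matrix.PosDef.exists_pos_mul_one_add_norm_sq_le {ι : Type*} [Fintype ι]
    {M : Matrix ι ι ℝ} (hM : M.PosDef) {ν : ℝ} (hν : 0 < ν) :
    ∃ a > 0, ∀ x, a * (1 + ‖x‖) ^ 2 ≤ 1 + 1 / ν * (x ⬝ᵥ (M *ᵥ x)) := by
  obtain ⟨c, hc, hquad⟩ := hM.exists_pos_mul_sq_norm_le_dotProduct_mulVec
  refine ⟨min (c / ν) 1 / 2, by positivity, fun x => ?_⟩
  have hscaled : c / ν * ‖x‖ ^ 2 ≤ 1 / ν * (x ⬝ᵥ (M *ᵥ x)) := by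
    rw [div_mul_eq_mul_div, one_div_mul_eq_div]
    exact div_le_div_of_nonneg_right (hquad x) hν.le
  linarith [min_one_div_two_mul_one_add_sq_le (div_pos hc hν) ‖x‖]

section Integrability

variable {E : Type*} [NormedAddCommGroup E] [NormedSpace ℝ E] [FiniteDimensional ℝ E]
  [MeasurableSpace E] [BorelSpace E] {μ : Measure E} [μ.IsAddHaarMeasure]

theorem integrable_rpow_neg_of_mul_one_add_norm_sq_le {g : E → ℝ} (hg : Measurable g)
    {a s : ℝ} (ha : 0 < a) (hs : (Module.finrank ℝ E : ℝ) < 2 * s)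
    (hle : ∀ z, a * (1 + ‖z‖) ^ 2 ≤ g z) : Integrable (fun z => g z ^ (-s)) μ := by
  refine ((integrable_one_add_norm hs).const_mul (a ^ (-s))).mono'
    (hg.pow_const _).aestronglyMeasurable (Filter.Eventually.of_forall fun z => ?_)
  have hpos : 0 < a * (1 + ‖z‖) ^ 2 := by positivity
  have hs0 : 0 ≤ s := by nlinarith [(Module.finrank ℝ E).cast_nonneg (α := ℝ)]
  rw [Real.norm_of_nonneg (Real.rpow_nonneg (hpos.le.trans (hle z)) _)]
  calc g z ^ (-s) ≤ (a * (1 + ‖z‖) ^ 2) ^ (-s) :=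
        Real.rpow_le_rpow_of_nonpos hpos (hle z) (by linarith)
    _ = a ^ (-s) * (1 + ‖z‖) ^ (-(2 * s)) := by
        rw [Real.mul_rpow ha.le (by positivity), ← Real.rpow_natCast,
          ← Real.rpow_mul (by positivity)]
        ring_nf

end Integrability

theorem exists_pos_mul_integral_eq_one {α : Type*} [MeasurableSpace α] {μ : Measure α}
    [NeZero μ] {f : α → ℝ} (hf : Integrable f μ) (hpos : ∀ x, 0 < f x) :
    ∃ c > 0, ∫ x, c * f x ∂μ = 1 := by
  have hI : 0 < ∫ x, f x ∂μ := by
    rw [integral_pos_iff_support_of_nonneg (fun x => (hpos x).le) hf,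
      Function.support_eq_univ fun x => (hpos x).ne']
    exact Measure.measure_univ_pos.mpr (NeZero.ne μ)
  exact ⟨(∫ x, f x ∂μ)⁻¹, inv_pos.mpr hI, by rw [integral_const_mul, inv_mul_cancel₀ hI.ne']⟩

theorem studentT_kernel_integrable_and_proper_density_general
    (d : ℕ) (ν : ℝ) (hν : 0 < ν)
    (μ : Fin d → ℝ)
    (Sig : Matrix (Fin d) (Fin d) ℝ) (hSig : Sig.PosDef) :
    Integrable
        (fun z : Fin d → ℝ =>
          (1 + (1 / ν) * ((z - μ) ⬝ᵥ (Sig⁻¹ *ᵥ (z - μ)))) ^ (-(ν + (d : ℝ)) / 2)) ∧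
      ∃ c : ℝ, 0 < c ∧
        ∫ z : Fin d → ℝ,
            c * (1 + (1 / ν) * ((z - μ) ⬝ᵥ (Sig⁻¹ *ᵥ (z - μ)))) ^ (-(ν + (d : ℝ)) / 2) = 1 := by
  obtain ⟨a, ha, hbase⟩ := hSig.inv.exists_pos_mul_one_add_norm_sq_le hν
  have hdim : (Module.finrank ℝ (Fin d → ℝ) : ℝ) < 2 * ((ν + d) / 2) := by
    rw [Module.finrank_fintype_fun_eq_card, Fintype.card_fin]
    linarith
  have hint : Integrable fun z : Fin d → ℝ =>
      (1 + (1 / ν) * ((z - μ) ⬝ᵥ (Sig⁻¹ *ᵥ (z - μ)))) ^ (-(ν + (d : ℝ)) / 2) := by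
    simp only [neg_div]
    exact (integrable_rpow_neg_of_mul_one_add_norm_sq_le (by fun_prop) ha hdim hbase).comp_sub_right
      μ
  refine ⟨hint, exists_pos_mul_integral_eq_one hint fun z => ?_⟩
  have hpos : 0 < a * (1 + ‖z - μ‖) ^ 2 := by positivity
  exact Real.rpow_pos_of_pos (hpos.trans_le (hbase _)) _

/-- **The multivariate Student-t kernel is integrable and normalizable.**
For `d ≥ 1`, `ν > 0`, `μ ∈ ℝ^d` and a symmetric positive definite `d × d` matrix `Σ`,
the kernel `z ↦ (1 + (1/ν)(z - μ)ᵀ Σ⁻¹ (z - μ))^(-(ν+d)/2)` is integrable over `ℝ^d`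
with respect to Lebesgue measure; consequently there is a normalizing constant `c > 0`
making it a proper probability density. -/
theorem studentT_kernel_integrable_and_proper_density
    (d : ℕ) (hd : 1 ≤ d) (ν : ℝ) (hν : 0 < ν)
    (μ : Fin d → ℝ)
    (Sig : Matrix (Fin d) (Fin d) ℝ) (hSigSym : Sig.IsSymm) (hSig : Sig.PosDef) :
    Integrable
        (fun z : Fin d → ℝ =>
          (1 + (1 / ν) * ((z - μ) ⬝ᵥ (Sig⁻¹ *ᵥ (z - μ)))) ^ (-(ν + (d : ℝ)) / 2)) ∧
      ∃ c : ℝ, 0 < c ∧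
        ∫ z : Fin d → ℝ,
            c * (1 + (1 / ν) * ((z - μ) ⬝ᵥ (Sig⁻¹ *ᵥ (z - μ)))) ^ (-(ν + (d : ℝ)) / 2) = 1 :=
  studentT_kernel_integrable_and_proper_density_general d ν hν μ Sig hSig
end

section
/- Let d ≥ 1 be an integer, ν > 0, μ ∈ ℝ^d, and let Σ be a symmetric positive definite d×d real matrix. Define δ(z) = (z − μ)ᵀ Σ⁻¹ (z − μ) and ℓ(z) = ((ν + d)/2) · log(1 + δ(z)/ν). Let R_z ≥ 0. Then for all z with ‖z − μ‖ ≤ R_z, the Hessian of ℓ satisfies the operator-norm bound ‖∇²ℓ(z)‖ ≤ ((ν + d)/ν) ‖Σ⁻¹‖ + (2(ν + d)/ν²) ‖Σ⁻¹‖² R_z². -/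
/-!
Writing `T = Σ⁻¹` and `v = z - μ`, the gradient of `ℓ` is `(ν + d) (ν + δ)⁻¹ T v`, so the
Hessian is `(ν + d) [(ν + δ)⁻¹ T - 2 (ν + δ)⁻² (T v)(T v)ᵀ]`. Since `δ ≥ 0`, the factors `(ν + δ)⁻¹` and
`(ν + δ)⁻²` are at most `ν⁻¹` and `ν⁻²`, and the rank-one term has norm
`‖T v‖² ≤ ‖T‖² R_z²`; the triangle inequality gives the bound.
-/

open scoped RealInnerProductSpace
open InnerProductSpace ContinuousLinearMap

variable {E : Type*} [NormedAddCommGroup E] [InnerProductSpace ℝ E]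

def mahalanobisSq (T : E →L[ℝ] E) (μ x : E) : ℝ := ⟪x - μ, T (x - μ)⟫

theorem norm_inv_add_smul_sub_smul_rankOne_le {ν s : ℝ} (hν : 0 < ν) (hs : 0 ≤ s)
    (T : E →L[ℝ] E) (u : E) :
    ‖(ν + s)⁻¹ • T - (2 * ((ν + s) ^ 2)⁻¹) • rankOne ℝ u u‖ ≤ ‖T‖ / ν + 2 * ‖u‖ ^ 2 / ν ^ 2 :=
  calc ‖(ν + s)⁻¹ • T - (2 * ((ν + s) ^ 2)⁻¹) • rankOne ℝ u u‖
      ≤ ‖(ν + s)⁻¹ • T‖ + ‖(2 * ((ν + s) ^ 2)⁻¹) • rankOne ℝ u u‖ := norm_sub_le _ _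
    _ = ‖T‖ / (ν + s) + 2 * ‖u‖ ^ 2 / (ν + s) ^ 2 := by
      rw [norm_smul, norm_smul, norm_rankOne, Real.norm_of_nonneg (by positivity),
        Real.norm_of_nonneg (by positivity)]
      ring
    _ ≤ ‖T‖ / ν + 2 * ‖u‖ ^ 2 / ν ^ 2 := by gcongr <;> linarith

section

variable {T : E →L[ℝ] E} {μ : E}

theorem mahalanobisSq_nonneg (hT : T.IsPositive) (x : E) : 0 ≤ mahalanobisSq T μ x :=
  hT.re_inner_nonneg_right (x - μ)

variable [CompleteSpace E]

theorem hasGradientAt_mahalanobisSq (hT : T.IsSymmetric) (x : E) :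
    HasGradientAt (mahalanobisSq T μ) ((2 : ℝ) • T (x - μ)) x := by
  have hsub : HasFDerivAt (fun y : E => y - μ) (ContinuousLinearMap.id ℝ E) x :=
    (hasFDerivAt_id x).sub_const μ
  have hq := hsub.inner ℝ (T.hasFDerivAt.comp x hsub)
  rw [hasGradientAt_iff_hasFDerivAt]
  refine hq.congr_fderiv ?_
  ext h
  change ⟪x - μ, T h⟫ + ⟪h, T (x - μ)⟫ = ⟪(2 : ℝ) • T (x - μ), h⟫
  have hTh : ⟪T h, x - μ⟫ = ⟪h, T (x - μ)⟫ := hT h (x - μ)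
  rw [real_inner_comm, hTh, real_inner_smul_left, real_inner_comm]
  ring

theorem hasGradientAt_mul_log_one_add_mahalanobisSq_div (hT : T.IsSymmetric) {ν : ℝ} (hν : ν ≠ 0)
    (c : ℝ) {x : E} (hx : ν + mahalanobisSq T μ x ≠ 0) :
    HasGradientAt (fun y => c * Real.log (1 + mahalanobisSq T μ y / ν))
      ((2 * c) • (ν + mahalanobisSq T μ x)⁻¹ • T (x - μ)) x := by
  have hq : HasFDerivAt (mahalanobisSq T μ) (toDual ℝ E ((2 : ℝ) • T (x - μ))) x :=
    hasGradientAt_iff_hasFDerivAt.mp (hasGradientAt_mahalanobisSq hT x)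
  have hdiv : HasFDerivAt (fun y => 1 + mahalanobisSq T μ y / ν)
      (ν⁻¹ • toDual ℝ E ((2 : ℝ) • T (x - μ))) x := by
    simpa only [div_eq_mul_inv, mul_comm _ ν⁻¹] using (hq.const_mul ν⁻¹).const_add 1
  have hlog := (hdiv.log (by rw [one_add_div hν]; exact div_ne_zero hx hν)).const_mul c
  rw [hasGradientAt_iff_hasFDerivAt]
  refine hlog.congr_fderiv ?_
  ext h
  simp only [smul_apply, toDual_apply_apply, real_inner_smul_left, smul_eq_mul, one_add_div hν]
  field_simp

theorem hasFDerivAt_inv_add_mahalanobisSq_smul (hT : T.IsSymmetric) {ν : ℝ} {x : E}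
    (hx : ν + mahalanobisSq T μ x ≠ 0) :
    HasFDerivAt (fun y => (ν + mahalanobisSq T μ y)⁻¹ • T (y - μ))
      ((ν + mahalanobisSq T μ x)⁻¹ • T
        - (2 * ((ν + mahalanobisSq T μ x) ^ 2)⁻¹) • rankOne ℝ (T (x - μ)) (T (x - μ))) x := by
  have hq : HasFDerivAt (mahalanobisSq T μ) (toDual ℝ E ((2 : ℝ) • T (x - μ))) x :=
    hasGradientAt_iff_hasFDerivAt.mp (hasGradientAt_mahalanobisSq hT x)
  have hinv := (hasDerivAt_inv hx).comp_hasFDerivAt x (hq.const_add ν)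
  have hTsub : HasFDerivAt (fun y => T (y - μ)) T x :=
    (T.hasFDerivAt.comp x ((hasFDerivAt_id x).sub_const μ)).congr_fderiv (comp_id T)
  refine (hinv.smul hTsub).congr_fderiv ?_
  ext h
  simp only [add_apply, sub_apply, smul_apply, smulRight_apply, toDual_apply_apply,
    rankOne_apply, real_inner_comm h, real_inner_smul_right, smul_eq_mul, Function.comp_apply]
  module

end

open Matrix

theorem studentT_nll_hessian_norm_bound_general
    (d : ℕ) (ν : ℝ) (hν : 0 < ν)
    (μ : EuclideanSpace ℝ (Fin d))
    (Sig : Matrix (Fin d) (Fin d) ℝ) (hSig : Sig.PosDef)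
    (δ : EuclideanSpace ℝ (Fin d) → ℝ)
    (hδ : δ = fun (z : EuclideanSpace ℝ (Fin d)) => (z - μ) ⬝ᵥ (Sig⁻¹ *ᵥ (z - μ)))
    (ℓ : EuclideanSpace ℝ (Fin d) → ℝ)
    (hℓ : ℓ = fun (z : EuclideanSpace ℝ (Fin d)) =>
      ((ν + (d : ℝ)) / 2) * Real.log (1 + δ z / ν))
    (Rz : ℝ) :
    ∀ z : EuclideanSpace ℝ (Fin d), ‖z - μ‖ ≤ Rz →
      ‖fderiv ℝ (gradient ℓ) z‖ ≤
        ((ν + (d : ℝ)) / ν) * ‖toEuclideanCLM (𝕜 := ℝ) Sig⁻¹‖ +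
          (2 * (ν + (d : ℝ)) / ν ^ 2) * ‖toEuclideanCLM (𝕜 := ℝ) Sig⁻¹‖ ^ 2 * Rz ^ 2 := by
  intro z hz
  set T := toEuclideanCLM (𝕜 := ℝ) Sig⁻¹
  have hT : T.IsPositive := Matrix.isPositive_toEuclideanLin_iff.mpr hSig.inv.posSemidef
  have hδT : δ = mahalanobisSq T μ :=
    hδ ▸ funext fun w => (inner_toEuclideanCLM Sig⁻¹ (w - μ) (w - μ)).symm
  have hpos (w) : 0 < ν + mahalanobisSq T μ w :=
    add_pos_of_pos_of_nonneg hν (mahalanobisSq_nonneg hT w)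
  have hgrad : gradient ℓ =
      fun w => (2 * ((ν + d) / 2)) • (ν + mahalanobisSq T μ w)⁻¹ • T (w - μ) := by
    subst hℓ hδT
    exact gradient_eq fun w =>
      hasGradientAt_mul_log_one_add_mahalanobisSq_div hT.isSymmetric hν.ne' _ (hpos w).ne'
  rw [hgrad, ((hasFDerivAt_inv_add_mahalanobisSq_smul hT.isSymmetric (hpos z).ne').fun_const_smul
    _).fderiv, norm_smul, Real.norm_of_nonneg (by positivity)]
  calc 2 * ((ν + d) / 2) * ‖_‖
      ≤ (ν + d) * (‖T‖ / ν + 2 * ‖T (z - μ)‖ ^ 2 / ν ^ 2) := by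
        rw [mul_div_cancel₀ _ two_ne_zero]
        gcongr
        exact norm_inv_add_smul_sub_smul_rankOne_le hν (mahalanobisSq_nonneg hT z) _ _
    _ ≤ (ν + d) * (‖T‖ / ν + 2 * (‖T‖ * Rz) ^ 2 / ν ^ 2) := by
        gcongr
        exact T.le_opNorm_of_le hz
    _ = _ := by ring

/-- **Operator-norm bound on the Hessian of the Student-t negative log-likelihood.**
With `δ(z) = (z - μ)ᵀ Σ⁻¹ (z - μ)` and `ℓ(z) = ((ν + d)/2) log(1 + δ(z)/ν)`, for every
`R_z ≥ 0` and every `z` with `‖z − μ‖ ≤ R_z`,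
`‖∇²ℓ(z)‖ ≤ ((ν + d)/ν) ‖Σ⁻¹‖ + (2(ν + d)/ν²) ‖Σ⁻¹‖² R_z²`,
where the Hessian is the derivative of the gradient and `‖·‖` denotes the operator
norm with respect to the Euclidean norm. -/
theorem studentT_nll_hessian_norm_bound
    (d : ℕ) (hd : 1 ≤ d) (ν : ℝ) (hν : 0 < ν)
    (μ : EuclideanSpace ℝ (Fin d))
    (Sig : Matrix (Fin d) (Fin d) ℝ) (hSigSym : Sig.IsSymm) (hSig : Sig.PosDef)
    (δ : EuclideanSpace ℝ (Fin d) → ℝ)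
    (hδ : δ = fun (z : EuclideanSpace ℝ (Fin d)) => (z - μ) ⬝ᵥ (Sig⁻¹ *ᵥ (z - μ)))
    (ℓ : EuclideanSpace ℝ (Fin d) → ℝ)
    (hℓ : ℓ = fun (z : EuclideanSpace ℝ (Fin d)) =>
      ((ν + (d : ℝ)) / 2) * Real.log (1 + δ z / ν))
    (Rz : ℝ) (hRz : 0 ≤ Rz) :
    ∀ z : EuclideanSpace ℝ (Fin d), ‖z - μ‖ ≤ Rz →
      ‖fderiv ℝ (gradient ℓ) z‖ ≤
        ((ν + (d : ℝ)) / ν) * ‖toEuclideanCLM (𝕜 := ℝ) Sig⁻¹‖ +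
          (2 * (ν + (d : ℝ)) / ν ^ 2) * ‖toEuclideanCLM (𝕜 := ℝ) Sig⁻¹‖ ^ 2 * Rz ^ 2 :=
  studentT_nll_hessian_norm_bound_general d ν hν μ Sig hSig δ hδ ℓ hℓ Rz
end

section
/- Let d ≥ 1 be an integer, ν > 0, μ ∈ ℝ^d, ε > 0, and let Σ be a symmetric d×d real matrix with Σ ⪰ ε I_d. Define δ(z) = (z − μ)ᵀ Σ⁻¹ (z − μ) and ℓ(z) = ((ν + d)/2) · log(1 + δ(z)/ν). Let R_z ≥ 0. Then for all z with ‖z − μ‖ ≤ R_z, the Hessian of ℓ satisfies ‖∇²ℓ(z)‖ ≤ ((ν + d)/ν) · (1/ε) + (2(ν + d)/ν²) · (R_z²/ε²). -/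
/-!
With `v = Σ⁻¹ (z - μ)` and `q = δ(z) ≥ 0`, the gradient of `ℓ` is `(ν + d) / (ν + q) • v` and its
derivative is `h ↦ (ν + d) / (ν + q) • Σ⁻¹ h - 2 (ν + d) / (ν + q)² ⟪v, h⟫ • v`. Bounding
`ν + q ≥ ν`, `‖Σ⁻¹‖ ≤ 1 / ε` (coercivity of `Σ`) and `‖v‖ ≤ ‖Σ⁻¹‖ ‖z - μ‖ ≤ R_z / ε` termwise
gives the estimate.
-/

open Matrix

open ContinuousLinearMap Real

section

variable {E : Type*} [NormedAddCommGroup E] [InnerProductSpace ℝ E]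

lemma norm_le_div_of_coercive {S : E → E} {ε : ℝ} (hε : 0 < ε)
    (hS : ∀ y, ε * ‖y‖ ^ 2 ≤ inner ℝ y (S y)) (y : E) : ‖y‖ ≤ ‖S y‖ / ε := by
  rw [le_div_iff₀' hε]
  rcases (norm_nonneg y).eq_or_lt with hy | hy
  · rw [← hy, mul_zero]
    exact norm_nonneg _
  · refine le_of_mul_le_mul_right ?_ hy
    calc ε * ‖y‖ * ‖y‖ = ε * ‖y‖ ^ 2 := by ring
      _ ≤ inner ℝ y (S y) := hS y
      _ ≤ ‖S y‖ * ‖y‖ := (real_inner_le_norm y (S y)).trans_eq (mul_comm _ _)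

lemma norm_smul_add_smulRight_innerSL_le (a b : ℝ) (T : E →L[ℝ] E) (v : E) :
    ‖a • T + (b • innerSL ℝ v).smulRight v‖ ≤ |a| * ‖T‖ + |b| * ‖v‖ ^ 2 :=
  calc ‖a • T + (b • innerSL ℝ v).smulRight v‖
      ≤ ‖a • T‖ + ‖(b • innerSL ℝ v).smulRight v‖ := norm_add_le _ _
    _ = |a| * ‖T‖ + |b| * ‖v‖ ^ 2 := by
      rw [norm_smul, norm_smulRight_apply, norm_smul, innerSL_apply_norm, Real.norm_eq_abs,
        Real.norm_eq_abs]
      ring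

lemma hasFDerivAt_reApplyInnerSelf_sub {T : E →L[ℝ] E} (hT : (T : E →ₗ[ℝ] E).IsSymmetric)
    (μ z : E) :
    HasFDerivAt (fun z => T.reApplyInnerSelf (z - μ)) (2 • innerSL ℝ (T (z - μ))) z := by
  have h := (hT.hasStrictFDerivAt_reApplyInnerSelf (z - μ)).hasFDerivAt.comp z
    (hasFDerivAt_sub_const μ)
  rwa [comp_id] at h

/-- With `T = Σ⁻¹` and `c = ν + d` this is the Student-t negative log-likelihood. -/
noncomputable def studentTNLL (T : E →L[ℝ] E) (μ : E) (ν c : ℝ) (z : E) : ℝ :=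
  c / 2 * log (1 + T.reApplyInnerSelf (z - μ) / ν)

variable [CompleteSpace E] {T : E →L[ℝ] E} {ν : ℝ}

lemma hasGradientAt_studentTNLL (hT : T.IsPositive) (hν : 0 < ν) (μ : E) (c : ℝ) (z : E) :
    HasGradientAt (studentTNLL T μ ν c)
      ((c / (ν + T.reApplyInnerSelf (z - μ))) • T (z - μ)) z := by
  set q := T.reApplyInnerSelf (z - μ)
  have hq : 0 < ν + q := add_pos_of_pos_of_nonneg hν (hT.2 _)
  have hq' : 1 + q / ν ≠ 0 := by rw [one_add_div hν.ne']; exact div_ne_zero hq.ne' hν.ne'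
  have hlog : HasDerivAt (fun t => c / 2 * log (1 + t / ν)) (c / 2 * ((1 / ν) / (1 + q / ν))) q :=
    ((((hasDerivAt_id q).div_const ν).const_add 1).log hq').const_mul (c / 2)
  refine (hlog.comp_hasFDerivAt z
    (hasFDerivAt_reApplyInnerSelf_sub hT.isSymmetric μ z)).congr_fderiv ?_
  ext w
  simp only [InnerProductSpace.toDual_apply_apply, real_inner_smul_left, _root_.smul_apply,
    innerSL_apply_apply, smul_eq_mul, nsmul_eq_mul]
  field_simp
  ring

lemma hasFDerivAt_gradient_studentTNLL (hT : T.IsPositive) (hν : 0 < ν) (μ : E) (c : ℝ) (z : E) :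
    HasFDerivAt (gradient (studentTNLL T μ ν c))
      ((c / (ν + T.reApplyInnerSelf (z - μ))) • T +
        ((-(2 * c) / (ν + T.reApplyInnerSelf (z - μ)) ^ 2) • innerSL ℝ (T (z - μ))).smulRight
          (T (z - μ))) z := by
  set q := T.reApplyInnerSelf (z - μ)
  have hq : 0 < ν + q := add_pos_of_pos_of_nonneg hν (hT.2 _)
  have hgrad : gradient (studentTNLL T μ ν c) =
      fun z => (c / (ν + T.reApplyInnerSelf (z - μ))) • T (z - μ) :=
    funext fun z => (hasGradientAt_studentTNLL hT hν μ c z).gradient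
  have hcoef : HasDerivAt (fun t => c / (ν + t)) (-c / (ν + q) ^ 2) q :=
    ((hasDerivAt_const q c).div ((hasDerivAt_id q).const_add ν) hq.ne').congr_deriv (by simp)
  have hTsub : HasFDerivAt (fun z => T (z - μ)) T z := by
    have h := T.hasFDerivAt.comp z (hasFDerivAt_sub_const μ)
    rwa [comp_id] at h
  rw [hgrad]
  refine ((hcoef.comp_hasFDerivAt z
    (hasFDerivAt_reApplyInnerSelf_sub hT.isSymmetric μ z)).smul hTsub).congr_fderiv ?_
  rw [← Nat.cast_smul_eq_nsmul ℝ, smul_smul]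
  congr 3
  push_cast
  ring

lemma norm_fderiv_gradient_studentTNLL_le (hT : T.IsPositive) (hν : 0 < ν) (μ : E) {c : ℝ}
    (hc : 0 ≤ c) (z : E) :
    ‖fderiv ℝ (gradient (studentTNLL T μ ν c)) z‖ ≤
      c / ν * ‖T‖ + 2 * c / ν ^ 2 * ‖T (z - μ)‖ ^ 2 := by
  have hq : ν ≤ ν + T.reApplyInnerSelf (z - μ) := le_add_of_nonneg_right (hT.2 _)
  have hq₀ := hν.trans_le hq
  rw [(hasFDerivAt_gradient_studentTNLL hT hν μ c z).fderiv]
  refine (norm_smul_add_smulRight_innerSL_le _ _ _ _).trans ?_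
  rw [abs_div, abs_div, abs_neg, abs_of_nonneg hc, abs_of_nonneg (by positivity : 0 ≤ 2 * c),
    abs_of_pos hq₀, abs_of_pos (pow_pos hq₀ 2)]
  gcongr

end

namespace Matrix

variable {n : Type*} [DecidableEq n]

lemma posDef_of_posSemidef_sub_smul_one {A : Matrix n n ℝ} {ε : ℝ} (hε : 0 < ε)
    (hA : (A - ε • 1).PosSemidef) : A.PosDef := by
  simpa using PosDef.posSemidef_add hA (PosDef.one.smul hε)

variable [Fintype n]

lemma reApplyInnerSelf_toEuclideanCLM (A : Matrix n n ℝ) (x : EuclideanSpace ℝ n) :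
    (toEuclideanCLM (𝕜 := ℝ) A).reApplyInnerSelf x = x.ofLp ⬝ᵥ A *ᵥ x.ofLp := by
  rw [reApplyInnerSelf_apply, RCLike.re_to_real, real_inner_comm, inner_toEuclideanCLM]

lemma PosSemidef.isPositive_toEuclideanCLM {A : Matrix n n ℝ} (hA : A.PosSemidef) :
    (toEuclideanCLM (𝕜 := ℝ) A).IsPositive :=
  isPositive_toEuclideanLin_iff.mpr hA

lemma norm_toEuclideanCLM_inv_le {A : Matrix n n ℝ} {ε : ℝ} (hε : 0 < ε)
    (hA : (A - ε • 1).PosSemidef) : ‖toEuclideanCLM (𝕜 := ℝ) A⁻¹‖ ≤ ε⁻¹ := by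
  have hcoercive : ∀ y, ε * ‖y‖ ^ 2 ≤ inner ℝ y (toEuclideanCLM (𝕜 := ℝ) A y) := fun y => by
    simpa [reApplyInnerSelf_apply, inner_sub_left, real_inner_smul_left, real_inner_smul_right,
      real_inner_self_eq_norm_sq, real_inner_comm] using hA.isPositive_toEuclideanCLM.2 y
  have hdet := (posDef_of_posSemidef_sub_smul_one hε hA).det_pos
  refine opNorm_le_bound _ (inv_nonneg.2 hε.le) fun x => ?_
  have hinv : toEuclideanCLM (𝕜 := ℝ) A (toEuclideanCLM (𝕜 := ℝ) A⁻¹ x) = x := by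
    change (toEuclideanCLM (𝕜 := ℝ) A * toEuclideanCLM (𝕜 := ℝ) A⁻¹) x = x
    rw [← map_mul, mul_nonsing_inv _ hdet.ne'.isUnit, map_one, one_apply_eq_self]
  calc _ ≤ ‖toEuclideanCLM (𝕜 := ℝ) A (toEuclideanCLM (𝕜 := ℝ) A⁻¹ x)‖ / ε :=
        norm_le_div_of_coercive hε hcoercive _
    _ = ε⁻¹ * ‖x‖ := by rw [hinv, div_eq_inv_mul]

end Matrix

theorem studentT_nll_hessian_norm_bound_of_eps_general
    (d : ℕ) (ν : ℝ) (hν : 0 < ν)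
    (μ : EuclideanSpace ℝ (Fin d)) (ε : ℝ) (hε : 0 < ε)
    (Sig : Matrix (Fin d) (Fin d) ℝ)
    (hSig : (Sig - ε • (1 : Matrix (Fin d) (Fin d) ℝ)).PosSemidef)
    (δ : EuclideanSpace ℝ (Fin d) → ℝ)
    (hδ : δ = fun (z : EuclideanSpace ℝ (Fin d)) => (z - μ) ⬝ᵥ (Sig⁻¹ *ᵥ (z - μ)))
    (ℓ : EuclideanSpace ℝ (Fin d) → ℝ)
    (hℓ : ℓ = fun (z : EuclideanSpace ℝ (Fin d)) =>
      ((ν + (d : ℝ)) / 2) * Real.log (1 + δ z / ν))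
    (Rz : ℝ) :
    ∀ z : EuclideanSpace ℝ (Fin d), ‖z - μ‖ ≤ Rz →
      ‖fderiv ℝ (gradient ℓ) z‖ ≤
        ((ν + (d : ℝ)) / ν) * (1 / ε) +
          (2 * (ν + (d : ℝ)) / ν ^ 2) * (Rz ^ 2 / ε ^ 2) := by
  intro z hz
  set T := toEuclideanCLM (𝕜 := ℝ) Sig⁻¹
  have hT : T.IsPositive :=
    (posDef_of_posSemidef_sub_smul_one hε hSig).posSemidef.inv.isPositive_toEuclideanCLM
  have hTnorm : ‖T‖ ≤ 1 / ε := (norm_toEuclideanCLM_inv_le hε hSig).trans_eq (one_div ε).symm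
  have hTz : ‖T (z - μ)‖ ≤ Rz / ε :=
    calc ‖T (z - μ)‖ ≤ ‖T‖ * ‖z - μ‖ := le_opNorm _ _
      _ ≤ 1 / ε * Rz := by gcongr
      _ = Rz / ε := one_div_mul_eq_div ε Rz
  have hℓT : ℓ = studentTNLL T μ ν (ν + d) := by
    funext z
    simp [hℓ, hδ, studentTNLL, T, reApplyInnerSelf_toEuclideanCLM]
  calc ‖fderiv ℝ (gradient ℓ) z‖
      ≤ (ν + d) / ν * ‖T‖ + 2 * (ν + d) / ν ^ 2 * ‖T (z - μ)‖ ^ 2 := by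
        rw [hℓT]
        exact norm_fderiv_gradient_studentTNLL_le hT hν μ (by positivity) z
    _ ≤ (ν + d) / ν * (1 / ε) + 2 * (ν + d) / ν ^ 2 * (Rz / ε) ^ 2 := by gcongr
    _ = _ := by rw [div_pow]

/-- **Hessian norm bound under an eigenvalue lower bound `Σ ⪰ ε I`.**
If `Σ` is symmetric with `Σ − ε I_d` positive semidefinite for some `ε > 0`, then with
`δ(z) = (z - μ)ᵀ Σ⁻¹ (z - μ)` and `ℓ(z) = ((ν + d)/2) log(1 + δ(z)/ν)`, for every
`R_z ≥ 0` and every `z` with `‖z − μ‖ ≤ R_z`,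
`‖∇²ℓ(z)‖ ≤ ((ν + d)/ν)(1/ε) + (2(ν + d)/ν²)(R_z²/ε²)`. -/
theorem studentT_nll_hessian_norm_bound_of_eps
    (d : ℕ) (hd : 1 ≤ d) (ν : ℝ) (hν : 0 < ν)
    (μ : EuclideanSpace ℝ (Fin d)) (ε : ℝ) (hε : 0 < ε)
    (Sig : Matrix (Fin d) (Fin d) ℝ) (hSigSym : Sig.IsSymm)
    (hSig : (Sig - ε • (1 : Matrix (Fin d) (Fin d) ℝ)).PosSemidef)
    (δ : EuclideanSpace ℝ (Fin d) → ℝ)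
    (hδ : δ = fun (z : EuclideanSpace ℝ (Fin d)) => (z - μ) ⬝ᵥ (Sig⁻¹ *ᵥ (z - μ)))
    (ℓ : EuclideanSpace ℝ (Fin d) → ℝ)
    (hℓ : ℓ = fun (z : EuclideanSpace ℝ (Fin d)) =>
      ((ν + (d : ℝ)) / 2) * Real.log (1 + δ z / ν))
    (Rz : ℝ) (hRz : 0 ≤ Rz) :
    ∀ z : EuclideanSpace ℝ (Fin d), ‖z - μ‖ ≤ Rz →
      ‖fderiv ℝ (gradient ℓ) z‖ ≤
        ((ν + (d : ℝ)) / ν) * (1 / ε) +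
          (2 * (ν + (d : ℝ)) / ν ^ 2) * (Rz ^ 2 / ε ^ 2) :=
  studentT_nll_hessian_norm_bound_of_eps_general d ν hν μ ε hε Sig hSig δ hδ ℓ hℓ Rz
end

section
/- Let d ≥ 1 be an integer, ν > 0, μ ∈ ℝ^d, ε > 0, and let Σ be a symmetric d×d real matrix with Σ ⪰ ε I_d. Define δ(z) = (z − μ)ᵀ Σ⁻¹ (z − μ) and ℓ(z) = ((ν + d)/2) · log(1 + δ(z)/ν). Let R_z ≥ 0 and set M = ((ν + d)/ν)(1/ε) + (2(ν + d)/ν²)(R_z²/ε²). Then the gradient ∇ℓ is M-Lipschitz on the closed ball {z ∈ ℝ^d : ‖z − μ‖ ≤ R_z}: for all z, z' in this ball, ‖∇ℓ(z) − ∇ℓ(z')‖ ≤ M ‖z − z'‖. -/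
/-!
Write `u = z - μ` and `T = Σ⁻¹`. Then `∇ℓ(z) = k(u) • T u` with `k(u) = (ν + d) / (ν + ⟪T u, u⟫)`.
Since `Σ ⪰ ε I`, `T` is positive and `ε ‖T x‖ ≤ ‖Σ (T x)‖ = ‖x‖`, so `‖T‖ ≤ 1/ε`. Splitting
`k(u) • T u - k(u') • T u' = k(u) • T (u - u') + (k(u) - k(u')) • T u'`, the first term
contributes `(ν + d)/(ν ε)` because `k ≤ (ν + d)/ν`. For the second,
`|k(u) - k(u')| ≤ (ν + d)/ν² · |⟪T u, u⟫ - ⟪T u', u'⟫|`, and by symmetry of `T` the difference of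
quadratic forms is `⟪T (u + u'), u - u'⟫`, at most `2R/ε · ‖u - u'‖`; together with
`‖T u'‖ ≤ R/ε` this gives the term `2(ν + d)R²/(ν² ε²)`.
-/

open Matrix
open scoped RealInnerProductSpace

variable {E : Type*} [NormedAddCommGroup E] [InnerProductSpace ℝ E]

section Coercive

variable {S T : E →L[ℝ] E} {ε : ℝ}

theorem mul_norm_le_norm_apply_of_coercive (hS : ∀ y, ε * ‖y‖ ^ 2 ≤ ⟪S y, y⟫) (y : E) :
    ε * ‖y‖ ≤ ‖S y‖ := by
  rcases (norm_nonneg y).eq_or_lt with hy | hy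
  · simp [← hy]
  · refine le_of_mul_le_mul_right ?_ hy
    calc ε * ‖y‖ * ‖y‖ = ε * ‖y‖ ^ 2 := by ring
      _ ≤ ⟪S y, y⟫ := hS y
      _ ≤ ‖S y‖ * ‖y‖ := real_inner_le_norm _ _

theorem opNorm_le_inv_of_coercive_of_leftInverse (hε : 0 < ε)
    (hS : ∀ y, ε * ‖y‖ ^ 2 ≤ ⟪S y, y⟫) (hST : Function.LeftInverse S T) : ‖T‖ ≤ ε⁻¹ :=
  T.opNorm_le_bound (inv_nonneg.2 hε.le) fun x => by
    rw [inv_mul_eq_div, le_div_iff₀' hε]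
    simpa [hST x] using mul_norm_le_norm_apply_of_coercive hS (T x)

end Coercive

theorem HasDerivAt.comp_hasGradientAt [CompleteSpace E] {f : E → ℝ} {g x : E} {φ : ℝ → ℝ}
    {φ' : ℝ} (hφ : HasDerivAt φ φ' (f x)) (hf : HasGradientAt f g x) :
    HasGradientAt (φ ∘ f) (φ' • g) x := by
  rw [hasGradientAt_iff_hasFDerivAt] at hf ⊢
  simpa only [map_smul] using hφ.comp_hasFDerivAt x hf

theorem abs_div_add_sub_div_add_le {c ν p q : ℝ} (hc : 0 ≤ c) (hν : 0 < ν) (hp : 0 ≤ p)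
    (hq : 0 ≤ q) : |c / (ν + p) - c / (ν + q)| ≤ c / ν ^ 2 * |p - q| := by
  have hdiff : c / (ν + p) - c / (ν + q) = c * (q - p) / ((ν + p) * (ν + q)) := by
    field_simp
    ring
  rw [hdiff, abs_div, abs_mul, abs_of_nonneg hc,
    abs_of_pos (by positivity : 0 < (ν + p) * (ν + q)), abs_sub_comm, div_mul_eq_mul_div]
  exact div_le_div_of_nonneg_left (by positivity) (by positivity) (by nlinarith)

namespace LinearMap.IsSymmetric

variable {T : E →L[ℝ] E}

theorem inner_apply_self_sub_inner_apply_self (hT : (T : E →ₗ[ℝ] E).IsSymmetric) (u v : E) :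
    ⟪T u, u⟫ - ⟪T v, v⟫ = ⟪T (u + v), u - v⟫ := by
  have := hT u v
  simp only [ContinuousLinearMap.coe_coe] at this
  rw [map_add, inner_add_left, inner_sub_right, inner_sub_right, this, real_inner_comm (T v) u]
  ring

theorem hasGradientAt_inner_apply_self [CompleteSpace E] (hT : (T : E →ₗ[ℝ] E).IsSymmetric)
    (x : E) : HasGradientAt (fun u => ⟪T u, u⟫) ((2 : ℝ) • T x) x := by
  rw [hasGradientAt_iff_hasFDerivAt]
  have hq : T.reApplyInnerSelf = fun u => ⟪T u, u⟫ := by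
    ext u
    simp [ContinuousLinearMap.reApplyInnerSelf_apply]
  refine (hq ▸ (hT.hasStrictFDerivAt_reApplyInnerSelf x).hasFDerivAt).congr_fderiv ?_
  ext u
  simp [two_smul]

end LinearMap.IsSymmetric

section StudentT

variable {T : E →L[ℝ] E}

theorem hasGradientAt_studentT_nll [CompleteSpace E] (hT : (T : E →ₗ[ℝ] E).IsSymmetric) (c : ℝ)
    {ν : ℝ} (μ z : E) (hν : ν ≠ 0) (hq : ν + ⟪T (z - μ), z - μ⟫ ≠ 0) :
    HasGradientAt (fun z => c / 2 * Real.log (1 + ⟪T (z - μ), z - μ⟫ / ν))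
      ((c / (ν + ⟪T (z - μ), z - μ⟫)) • T (z - μ)) z := by
  have hquad : HasGradientAt (fun z => ⟪T (z - μ), z - μ⟫) ((2 : ℝ) • T (z - μ)) z := by
    have := (hT.hasGradientAt_inner_apply_self (z - μ)).hasFDerivAt.comp z
      (hasFDerivAt_sub_const (𝕜 := ℝ) (x := z) μ)
    exact hasGradientAt_iff_hasFDerivAt.2 this
  have hlog : HasDerivAt (fun t => c / 2 * Real.log (1 + t / ν))
      (c / 2 * (1 / ν / (1 + ⟪T (z - μ), z - μ⟫ / ν))) ⟪T (z - μ), z - μ⟫ :=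
    (((hasDerivAt_id _).div_const ν).const_add 1).log
      (by rw [id, one_add_div hν]; exact div_ne_zero hq hν) |>.const_mul (c / 2)
  have hcoef : c / 2 * (1 / ν / (1 + ⟪T (z - μ), z - μ⟫ / ν)) * 2 =
      c / (ν + ⟪T (z - μ), z - μ⟫) := by
    field_simp
  have h := hlog.comp_hasGradientAt (f := fun z => ⟪T (z - μ), z - μ⟫) hquad
  rwa [smul_smul, hcoef] at h

theorem norm_div_smul_sub_div_smul_le (hT : (T : E →ₗ[ℝ] E).IsPositive) {K c ν R : ℝ}
    (hTK : ‖T‖ ≤ K) (hc : 0 ≤ c) (hν : 0 < ν) {u v : E} (hu : ‖u‖ ≤ R) (hv : ‖v‖ ≤ R) :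
    ‖(c / (ν + ⟪T u, u⟫)) • T u - (c / (ν + ⟪T v, v⟫)) • T v‖ ≤
      (c / ν * K + 2 * c / ν ^ 2 * (R ^ 2 * K ^ 2)) * ‖u - v‖ := by
  set k := c / (ν + ⟪T u, u⟫)
  set k' := c / (ν + ⟪T v, v⟫)
  have hK : 0 ≤ K := (norm_nonneg T).trans hTK
  have hR : 0 ≤ R := (norm_nonneg u).trans hu
  have hpos (x : E) : 0 ≤ ⟪T x, x⟫ := hT.inner_nonneg_left x
  have hTx (x : E) : ‖T x‖ ≤ K * ‖x‖ := (T.le_opNorm x).trans (by gcongr)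
  have hk : |k| ≤ c / ν := by
    rw [abs_of_nonneg (div_nonneg hc (by linarith [hpos u]))]
    exact div_le_div_of_nonneg_left hc hν (le_add_of_nonneg_right (hpos u))
  have hquad : |⟪T u, u⟫ - ⟪T v, v⟫| ≤ 2 * R * K * ‖u - v‖ := by
    rw [hT.isSymmetric.inner_apply_self_sub_inner_apply_self]
    calc |⟪T (u + v), u - v⟫| ≤ ‖T (u + v)‖ * ‖u - v‖ := abs_real_inner_le_norm _ _
      _ ≤ K * (R + R) * ‖u - v‖ := by grw [hTx, norm_add_le, hu, hv]
      _ = 2 * R * K * ‖u - v‖ := by ring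
  have hkk' : |k - k'| ≤ c / ν ^ 2 * (2 * R * K * ‖u - v‖) :=
    (abs_div_add_sub_div_add_le hc hν (hpos u) (hpos v)).trans (by gcongr)
  calc ‖k • T u - k' • T v‖ = ‖k • T (u - v) + (k - k') • T v‖ := by
        rw [map_sub]
        congr 1
        module
    _ ≤ |k| * ‖T (u - v)‖ + |k - k'| * ‖T v‖ := by
        grw [norm_add_le, norm_smul, norm_smul, Real.norm_eq_abs, Real.norm_eq_abs]
    _ ≤ c / ν * (K * ‖u - v‖) + c / ν ^ 2 * (2 * R * K * ‖u - v‖) * (K * R) := by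
        grw [hk, hkk', hTx, hTx v, hv]
    _ = (c / ν * K + 2 * c / ν ^ 2 * (R ^ 2 * K ^ 2)) * ‖u - v‖ := by ring

end StudentT

namespace Matrix

variable {n : Type*} [DecidableEq n] {Sig : Matrix n n ℝ} {ε : ℝ}

theorem PosSemidef.posDef_of_sub_smul_one (hSig : (Sig - ε • 1).PosSemidef) (hε : 0 < ε) :
    Sig.PosDef := by
  simpa using PosDef.posSemidef_add hSig (PosDef.one.smul hε)

variable [Fintype n]

theorem isPositive_toEuclideanCLM (hSig : Sig.PosSemidef) :
    (toEuclideanCLM (𝕜 := ℝ) Sig : EuclideanSpace ℝ n →ₗ[ℝ] EuclideanSpace ℝ n).IsPositive := by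
  rw [coe_toEuclideanCLM_eq_toEuclideanLin]
  exact isPositive_toEuclideanLin_iff.2 hSig

theorem PosSemidef.mul_norm_sq_le_inner_toEuclideanCLM (hSig : (Sig - ε • 1).PosSemidef)
    (y : EuclideanSpace ℝ n) : ε * ‖y‖ ^ 2 ≤ ⟪toEuclideanCLM (𝕜 := ℝ) Sig y, y⟫ := by
  have h := (isPositive_toEuclideanCLM hSig).inner_nonneg_left y
  simp only [ContinuousLinearMap.coe_coe, map_sub, map_smul, map_one,
    _root_.sub_apply, _root_.smul_apply, one_apply_eq_self,
    inner_sub_left, real_inner_smul_left, real_inner_self_eq_norm_sq] at h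
  exact le_of_sub_nonneg h

theorem leftInverse_toEuclideanCLM_inv (hSig : IsUnit Sig) :
    Function.LeftInverse (toEuclideanCLM (𝕜 := ℝ) Sig) (toEuclideanCLM (𝕜 := ℝ) Sig⁻¹) := by
  intro x
  rw [← mul_apply_eq_comp, ← map_mul, mul_nonsing_inv _ ((isUnit_iff_isUnit_det _).1 hSig),
    map_one]
  rfl

end Matrix

theorem studentT_nll_gradient_lipschitz_on_ball_general
    (d : ℕ) (ν : ℝ) (hν : 0 < ν)
    (μ : EuclideanSpace ℝ (Fin d)) (ε : ℝ) (hε : 0 < ε)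
    (Sig : Matrix (Fin d) (Fin d) ℝ)
    (hSig : (Sig - ε • (1 : Matrix (Fin d) (Fin d) ℝ)).PosSemidef)
    (δ : EuclideanSpace ℝ (Fin d) → ℝ)
    (hδ : δ = fun (z : EuclideanSpace ℝ (Fin d)) => (z - μ) ⬝ᵥ (Sig⁻¹ *ᵥ (z - μ)))
    (ℓ : EuclideanSpace ℝ (Fin d) → ℝ)
    (hℓ : ℓ = fun (z : EuclideanSpace ℝ (Fin d)) =>
      ((ν + (d : ℝ)) / 2) * Real.log (1 + δ z / ν))
    (Rz : ℝ)
    (M : ℝ)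
    (hM : M = ((ν + (d : ℝ)) / ν) * (1 / ε) +
      (2 * (ν + (d : ℝ)) / ν ^ 2) * (Rz ^ 2 / ε ^ 2)) :
    ∀ z z' : EuclideanSpace ℝ (Fin d), ‖z - μ‖ ≤ Rz → ‖z' - μ‖ ≤ Rz →
      ‖gradient ℓ z - gradient ℓ z'‖ ≤ M * ‖z - z'‖ := by
  intro z z' hz hz'
  set T := toEuclideanCLM (𝕜 := ℝ) Sig⁻¹
  have hSigPD := hSig.posDef_of_sub_smul_one hε
  have hT : (T : EuclideanSpace ℝ (Fin d) →ₗ[ℝ] _).IsPositive :=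
    isPositive_toEuclideanCLM hSigPD.posSemidef.inv
  have hTnorm : ‖T‖ ≤ ε⁻¹ := opNorm_le_inv_of_coercive_of_leftInverse hε
    hSig.mul_norm_sq_le_inner_toEuclideanCLM (leftInverse_toEuclideanCLM_inv hSigPD.isUnit)
  have hℓT : ℓ = fun z => (ν + d) / 2 * Real.log (1 + ⟪T (z - μ), z - μ⟫ / ν) := by
    rw [hℓ, hδ]
    funext w
    rw [real_inner_comm, inner_toEuclideanCLM]
    rfl
  have hgrad (w : EuclideanSpace ℝ (Fin d)) :
      gradient ℓ w = ((ν + d) / (ν + ⟪T (w - μ), w - μ⟫)) • T (w - μ) := by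
    rw [hℓT]
    exact (hasGradientAt_studentT_nll hT.isSymmetric _ μ w hν.ne'
      (add_pos_of_pos_of_nonneg hν (hT.inner_nonneg_left _)).ne').gradient
  rw [hgrad, hgrad, ← sub_sub_sub_cancel_right z z' μ, hM]
  convert norm_div_smul_sub_div_smul_le (c := ν + d) hT hTnorm (by positivity) hν hz hz' using 2
  ring

/-- **Lipschitz gradient of the Student-t negative log-likelihood on a ball.**
If `Σ` is symmetric with `Σ − ε I_d` positive semidefinite for some `ε > 0`, then with
`δ(z) = (z - μ)ᵀ Σ⁻¹ (z - μ)`, `ℓ(z) = ((ν + d)/2) log(1 + δ(z)/ν)`, `R_z ≥ 0` and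
`M = ((ν + d)/ν)(1/ε) + (2(ν + d)/ν²)(R_z²/ε²)`, the gradient `∇ℓ` is `M`-Lipschitz on
the closed ball `{z : ‖z − μ‖ ≤ R_z}`. -/
theorem studentT_nll_gradient_lipschitz_on_ball
    (d : ℕ) (hd : 1 ≤ d) (ν : ℝ) (hν : 0 < ν)
    (μ : EuclideanSpace ℝ (Fin d)) (ε : ℝ) (hε : 0 < ε)
    (Sig : Matrix (Fin d) (Fin d) ℝ) (hSigSym : Sig.IsSymm)
    (hSig : (Sig - ε • (1 : Matrix (Fin d) (Fin d) ℝ)).PosSemidef)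
    (δ : EuclideanSpace ℝ (Fin d) → ℝ)
    (hδ : δ = fun (z : EuclideanSpace ℝ (Fin d)) => (z - μ) ⬝ᵥ (Sig⁻¹ *ᵥ (z - μ)))
    (ℓ : EuclideanSpace ℝ (Fin d) → ℝ)
    (hℓ : ℓ = fun (z : EuclideanSpace ℝ (Fin d)) =>
      ((ν + (d : ℝ)) / 2) * Real.log (1 + δ z / ν))
    (Rz : ℝ) (hRz : 0 ≤ Rz)
    (M : ℝ)
    (hM : M = ((ν + (d : ℝ)) / ν) * (1 / ε) +
      (2 * (ν + (d : ℝ)) / ν ^ 2) * (Rz ^ 2 / ε ^ 2)) :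
    ∀ z z' : EuclideanSpace ℝ (Fin d), ‖z - μ‖ ≤ Rz → ‖z' - μ‖ ≤ Rz →
      ‖gradient ℓ z - gradient ℓ z'‖ ≤ M * ‖z - z'‖ :=
  studentT_nll_gradient_lipschitz_on_ball_general d ν hν μ ε hε Sig hSig δ hδ ℓ hℓ Rz M hM
end
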